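/- Let A be a uniform algebra on X, φ a character of A, and let E ⊆ X be a closed set containing the supports of all representing measures of φ, with E equal to the closure of the union of those supports. Suppose f ∈ A_E := {g ∈ C(X) : g|E ∈ closure(A|E)} is real-valued on E. If f is constant on the support of every representing measure of φ, then f is constant on E. -/

import Mathlib

/-!
On the support of a representing measure `λ`, the constant value of `f` is `∫ f dλ`. This integral
does not depend on `λ`: if `gₙ ∈ A` converge to `f` uniformly on `E`, which carries every
representing measure, then `∫ f dλ = lim ∫ gₙ dλ = lim φ(gₙ)`. So `f` takes a single value on the
union of the supports, hence by continuity on its closure `E`.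
-/

open MeasureTheory

variable {X : Type} [TopologicalSpace X] [CompactSpace X] [T2Space X]
  [MeasurableSpace X] [BorelSpace X]

/-- The closed support of a measure. -/
def msupp (μ : Measure X) : Set X :=
  {x : X | ∀ U : Set X, IsOpen U → x ∈ U → μ U ≠ 0}

/-- `μ` is a representing measure for the character `φ` of `A`: a regular Borel
probability measure with `φ f = ∫ f dμ` for all `f ∈ A`. -/
def IsRepMeasure (A : Subalgebra ℂ C(X, ℂ)) (φ : A →ₐ[ℂ] ℂ) (μ : Measure X) : Prop :=
  IsProbabilityMeasure μ ∧ μ.Regular ∧ ∀ f : A, φ f = ∫ x, (f : C(X, ℂ)) x ∂μ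

open Filter Topology

theorem TendstoUniformlyOn.tendsto_integral_of_ae_mem {α E ι : Type*} [MeasurableSpace α]
    [NormedAddCommGroup E] [NormedSpace ℝ E] {μ : Measure α} [IsFiniteMeasure μ]
    {l : Filter ι} {F : ι → α → E} {f : α → E} {s : Set α}
    (h : TendstoUniformlyOn F f l s) (hs : ∀ᵐ x ∂μ, x ∈ s)
    (hF : ∀ᶠ i in l, Integrable (F i) μ) (hf : Integrable f μ) :
    Tendsto (fun i => ∫ x, F i x ∂μ) l (𝓝 (∫ x, f x ∂μ)) := by
  rw [Metric.tendsto_nhds]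
  intro ε hε
  have hδ : 0 < ε / (μ.real Set.univ + 1) := by positivity
  filter_upwards [Metric.tendstoUniformlyOn_iff.mp h _ hδ, hF] with i hclose hFi
  have hbound : ∀ᵐ x ∂μ, ‖F i x - f x‖ ≤ ε / (μ.real Set.univ + 1) := by
    filter_upwards [hs] with x hx
    rw [← dist_eq_norm, dist_comm]
    exact (hclose x hx).le
  calc dist (∫ x, F i x ∂μ) (∫ x, f x ∂μ)
      = ‖∫ x, F i x - f x ∂μ‖ := by rw [dist_eq_norm, integral_sub hFi hf]
    _ ≤ ε / (μ.real Set.univ + 1) * μ.real Set.univ := norm_integral_le_of_norm_le_const hbound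
    _ < ε := by
      rw [div_mul_eq_mul_div, div_lt_iff₀ (by positivity)]
      nlinarith

theorem msupp_eq_support (μ : Measure X) : msupp μ = μ.support := by
  ext x
  simp [msupp, Measure.support_eq_forall_isOpen, pos_iff_ne_zero, imp.swap]

theorem ae_mem_msupp (μ : Measure X) [μ.Regular] : ∀ᵐ x ∂μ, x ∈ msupp μ :=
  msupp_eq_support μ ▸ Measure.support_mem_ae_of_regular

namespace IsRepMeasure

variable {A : Subalgebra ℂ C(X, ℂ)} {φ : A →ₐ[ℂ] ℂ} {μ ν : Measure X}

theorem integral_eq_of_eqOn_msupp (hμ : IsRepMeasure A φ μ) {f : X → ℂ} {c : ℂ}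
    (hf : ∀ x ∈ msupp μ, f x = c) : ∫ x, f x ∂μ = c := by
  have := hμ.1
  have := hμ.2.1
  have hae : f =ᵐ[μ] fun _ => c := by
    filter_upwards [ae_mem_msupp μ] with x hx using hf x hx
  simp [integral_congr_ae hae]

theorem integrable (hμ : IsRepMeasure A φ μ) (f : C(X, ℂ)) : Integrable f μ :=
  have := hμ.1
  f.continuous.integrable_of_hasCompactSupport (.of_compactSpace _)

theorem integral_eq_of_mem_closure_restrict (hμ : IsRepMeasure A φ μ) (hν : IsRepMeasure A φ ν)
    {E : Set X} (hE : IsClosed E) (hμE : msupp μ ⊆ E) (hνE : msupp ν ⊆ E) {f : C(X, ℂ)}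
    (hf : f.restrict E ∈ closure ((fun g : C(X, ℂ) => g.restrict E) '' (A : Set C(X, ℂ)))) :
    ∫ x, f x ∂μ = ∫ x, f x ∂ν := by
  have := isCompact_iff_compactSpace.mp hE.isCompact
  obtain ⟨_, hgE, hlim⟩ := mem_closure_iff_seq_limit.mp hf
  choose g hgA hg using hgE
  have hunif : TendstoUniformlyOn (fun n => ⇑(g n)) f atTop E := by
    have hlim' : Tendsto (fun n => (g n).restrict E) atTop (𝓝 (f.restrict E)) := by
      simpa only [hg] using hlim
    rw [tendstoUniformlyOn_iff_tendstoUniformly_comp_coe]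
    exact ContinuousMap.tendsto_iff_tendstoUniformly.mp hlim'
  have hlim_of {ρ : Measure X} (hρ : IsRepMeasure A φ ρ) (hρE : msupp ρ ⊆ E) :
      Tendsto (fun n => φ ⟨g n, hgA n⟩) atTop (𝓝 (∫ x, f x ∂ρ)) := by
    have := hρ.1
    have := hρ.2.1
    simp only [hρ.2.2]
    exact hunif.tendsto_integral_of_ae_mem ((ae_mem_msupp ρ).mono hρE)
      (.of_forall fun n => hρ.integrable (g n)) (hρ.integrable f)
  exact tendsto_nhds_unique (hlim_of hμ hμE) (hlim_of hν hνE)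

end IsRepMeasure

theorem stmt_12_general (A : Subalgebra ℂ C(X, ℂ))
    (φ : A →ₐ[ℂ] ℂ)
    (E : Set X)
    (hE : E = closure (⋃ μ ∈ {μ : Measure X | IsRepMeasure A φ μ}, msupp μ))
    (f : C(X, ℂ))
    (hfAE : f.restrict E ∈
      closure ((fun g : C(X, ℂ) => g.restrict E) '' (A : Set C(X, ℂ))))
    (hconst : ∀ μ : Measure X, IsRepMeasure A φ μ → ∃ c : ℂ, ∀ x ∈ msupp μ, f x = c) :
    ∃ c : ℂ, ∀ x ∈ E, f x = c := by
  by_cases hrep : ∃ μ, IsRepMeasure A φ μ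
  · obtain ⟨μ₀, hμ₀⟩ := hrep
    have hmsupp_subset {μ : Measure X} (hμ : IsRepMeasure A φ μ) : msupp μ ⊆ E :=
      hE ▸ subset_closure.trans' (Set.subset_biUnion_of_mem (u := msupp) hμ)
    refine ⟨∫ x, f x ∂μ₀, fun x hx => ?_⟩
    rw [hE] at hx
    refine closure_minimal ?_ (isClosed_eq f.continuous continuous_const) hx
    simp only [Set.iUnion_subset_iff]
    intro μ hμ y hy
    obtain ⟨c, hc⟩ := hconst μ hμ
    rw [Set.mem_ofPred_eq, hc y hy, ← hμ.integral_eq_of_eqOn_msupp hc,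
      hμ.integral_eq_of_mem_closure_restrict hμ₀ (hE ▸ isClosed_closure) (hmsupp_subset hμ)
        (hmsupp_subset hμ₀) hfAE]
  · push Not at hrep
    simp [hE, hrep]

/-- Let `E` be the closure of the union of the supports of all representing measures of
a character `φ`. If `f ∈ A_E` is real-valued on `E` and constant on the support of every
representing measure of `φ`, then `f` is constant on `E`. -/
theorem stmt_12 (A : Subalgebra ℂ C(X, ℂ))
    (hclosed : IsClosed (A : Set C(X, ℂ)))
    (hsep : ∀ x y : X, x ≠ y → ∃ f ∈ A, f x ≠ f y)
    (φ : A →ₐ[ℂ] ℂ)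
    (E : Set X)
    (hE : E = closure (⋃ μ ∈ {μ : Measure X | IsRepMeasure A φ μ}, msupp μ))
    (f : C(X, ℂ))
    (hfAE : f.restrict E ∈
      closure ((fun g : C(X, ℂ) => g.restrict E) '' (A : Set C(X, ℂ))))
    (hreal : ∀ x ∈ E, (f x).im = 0)
    (hconst : ∀ μ : Measure X, IsRepMeasure A φ μ → ∃ c : ℂ, ∀ x ∈ msupp μ, f x = c) :
    ∃ c : ℂ, ∀ x ∈ E, f x = c :=
  stmt_12_general A φ E hE f hfAE hconst
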